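/- arXiv:2409.10834 — 2 statements merged into one kernel-verified Lean document; each statement's English description precedes it below -/
import Mathlib

section
/- Let u ∈ C²(ℝⁿ), n ≥ 2. Suppose for every unit vector ν ∈ ℝⁿ there exists λ_ν ∈ ℝ such that: (i) ∂u/∂ν(x) > 0 for all x with x·ν < λ_ν; (ii) ∂u/∂ν(x) < 0 for all x with x·ν > λ_ν; and (iii) u(x − 2(x·ν − λ_ν)ν) = u(x) for all x with x·ν < λ_ν. Then u is radially symmetric about some point x₀ ∈ ℝⁿ: u(x) = u(y) whenever |x − x₀| = |y − x₀|. -/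
/-!
Write `σ_ν` for the reflection in the hyperplane `⟪x, ν⟫ = λ_ν`; hypothesis (iii) together with
`σ_ν ∘ σ_ν = id` makes `u ∘ σ_ν = u` on all of space. Along a line in direction `ν`, `u` is strictly
increasing up to the hyperplane, so moving a point onto the hyperplane strictly increases `u`
unless it already lies on it. Doing this successively for the vectors of an orthonormal basis
shows that the point `x₀` with coordinates `λ_{b i}` is a strict global maximum of `u`. Since
`σ_ν` preserves `u`, it fixes this strict maximum, so every hyperplane passes through `x₀`.
Finally, if `‖x - x₀‖ = ‖y - x₀‖` then the perpendicular bisector of `x` and `y` passes through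
`x₀`, so it is one of these hyperplanes, and the reflection in it maps `x` to `y`.
-/

open scoped RealInnerProductSpace

variable {E : Type*} [NormedAddCommGroup E] [InnerProductSpace ℝ E]

-- A reflection (in the hyperplane `⟪x, ν⟫ = c`) only when `‖ν‖ = 1`.
noncomputable def hyperplaneReflection (ν : E) (c : ℝ) (x : E) : E :=
  x - (2 * (⟪x, ν⟫ - c)) • ν

section HyperplaneReflection

variable {ν : E} {c : ℝ}

lemma inner_hyperplaneReflection (hν : ‖ν‖ = 1) (x : E) :
    ⟪hyperplaneReflection ν c x, ν⟫ = 2 * c - ⟪x, ν⟫ := by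
  rw [hyperplaneReflection, inner_sub_left, real_inner_smul_left, real_inner_self_eq_norm_sq, hν]
  ring

lemma hyperplaneReflection_hyperplaneReflection (hν : ‖ν‖ = 1) (x : E) :
    hyperplaneReflection ν c (hyperplaneReflection ν c x) = x := by
  rw [hyperplaneReflection, inner_hyperplaneReflection hν, hyperplaneReflection]
  module

lemma hyperplaneReflection_eq_self_iff (hν : ‖ν‖ = 1) {x : E} :
    hyperplaneReflection ν c x = x ↔ ⟪x, ν⟫ = c := by
  have hν₀ : ν ≠ 0 := norm_ne_zero_iff.mp (by rw [hν]; exact one_ne_zero)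
  rw [hyperplaneReflection, sub_eq_self, smul_eq_zero, or_iff_left hν₀, mul_eq_zero,
    or_iff_right two_ne_zero, sub_eq_zero]

lemma apply_hyperplaneReflection_of_forall_inner_lt {β : Type*} {f : E → β} (hν : ‖ν‖ = 1)
    (hf : ∀ x, ⟪x, ν⟫ < c → f (hyperplaneReflection ν c x) = f x) (x : E) :
    f (hyperplaneReflection ν c x) = f x := by
  rcases lt_trichotomy ⟪x, ν⟫ c with h | h | h
  · exact hf x h
  · rw [(hyperplaneReflection_eq_self_iff hν).mpr h]
  · have h' : ⟪hyperplaneReflection ν c x, ν⟫ < c := by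
      rw [inner_hyperplaneReflection hν]; linarith
    simpa only [hyperplaneReflection_hyperplaneReflection hν] using (hf _ h').symm

end HyperplaneReflection

lemma hyperplaneReflection_of_norm_sub_eq_norm_sub {x y x₀ : E} (hxy : x ≠ y)
    (h : ‖x - x₀‖ = ‖y - x₀‖) :
    hyperplaneReflection (‖x - y‖⁻¹ • (x - y)) ⟪x₀, ‖x - y‖⁻¹ • (x - y)⟫ x = y := by
  have hd : ‖x - y‖ ≠ 0 := norm_ne_zero_iff.mpr (sub_ne_zero.mpr hxy)
  have hbisect : 2 * ⟪x - x₀, x - y⟫ = ‖x - y‖ ^ 2 := by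
    have := norm_sub_sq_real (x - x₀) (x - y)
    rw [sub_sub_sub_cancel_left, ← h] at this
    linarith
  have hcoef : 2 * (⟪x, ‖x - y‖⁻¹ • (x - y)⟫ - ⟪x₀, ‖x - y‖⁻¹ • (x - y)⟫) = ‖x - y‖ := by
    rw [← inner_sub_left, real_inner_smul_right, ← mul_assoc, mul_comm 2, mul_assoc, hbisect]
    field_simp
  rw [hyperplaneReflection, hcoef, smul_smul, mul_inv_cancel₀ hd, one_smul, sub_sub_cancel]

section Monotone

variable {u : E → ℝ} {ν : E} {c : ℝ}

lemma lt_apply_add_smul_of_inner_lt (hu : Differentiable ℝ u) (hν : ‖ν‖ = 1)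
    (hpos : ∀ x, ⟪x, ν⟫ < c → 0 < fderiv ℝ u x ν) {x : E} (hx : ⟪x, ν⟫ < c) :
    u x < u (x + (c - ⟪x, ν⟫) • ν) := by
  have hline : ∀ t : ℝ, HasDerivAt (fun s : ℝ => u (x + s • ν)) (fderiv ℝ u (x + t • ν) ν) t :=
    fun t => (hu _).hasFDerivAt.comp_hasDerivAt t
      (by simpa using ((hasDerivAt_id t).smul_const ν).const_add x)
  have hmono : StrictMonoOn (fun s : ℝ => u (x + s • ν)) (Set.Icc 0 (c - ⟪x, ν⟫)) := by
    refine strictMonoOn_of_deriv_pos (convex_Icc _ _)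
      (fun t _ => (hline t).continuousAt.continuousWithinAt) fun t ht => ?_
    rw [interior_Icc] at ht
    rw [(hline t).deriv]
    refine hpos _ ?_
    rw [inner_add_left, real_inner_smul_left, real_inner_self_eq_norm_sq, hν]
    linarith [ht.2]
  have hT : 0 ≤ c - ⟪x, ν⟫ := by linarith
  simpa using hmono (Set.left_mem_Icc.mpr hT) (Set.right_mem_Icc.mpr hT) (by linarith)

lemma lt_apply_add_smul_of_inner_ne (hu : Differentiable ℝ u) (hν : ‖ν‖ = 1)
    (hpos : ∀ x, ⟪x, ν⟫ < c → 0 < fderiv ℝ u x ν)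
    (hsymm : ∀ x, ⟪x, ν⟫ < c → u (hyperplaneReflection ν c x) = u x) {x : E}
    (hx : ⟪x, ν⟫ ≠ c) : u x < u (x + (c - ⟪x, ν⟫) • ν) := by
  rcases hx.lt_or_gt with h | h
  · exact lt_apply_add_smul_of_inner_lt hu hν hpos h
  · set y := hyperplaneReflection ν c x
    have hy : ⟪y, ν⟫ = 2 * c - ⟪x, ν⟫ := inner_hyperplaneReflection hν x
    have hsame : y + (c - ⟪y, ν⟫) • ν = x + (c - ⟪x, ν⟫) • ν := by
      rw [hy]; simp only [y, hyperplaneReflection]; module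
    rw [← apply_hyperplaneReflection_of_forall_inner_lt hν hsymm x, ← hsame]
    exact lt_apply_add_smul_of_inner_lt hu hν hpos (by rw [hy]; linarith)

end Monotone

lemma OrthonormalBasis.apply_lt_of_coordinate_ascent {ι : Type*} [Fintype ι]
    (b : OrthonormalBasis ι ℝ E) {f : E → ℝ} {x₀ : E}
    (hstep : ∀ i x, ⟪x, b i⟫ ≠ ⟪x₀, b i⟫ → f x < f (x + (⟪x₀, b i⟫ - ⟪x, b i⟫) • b i))
    {x : E} (hx : x ≠ x₀) : f x < f x₀ := by
  classical
  suffices ∀ s : Finset ι, ∀ x, (∀ j ∉ s, ⟪x, b j⟫ = ⟪x₀, b j⟫) → x = x₀ ∨ f x < f x₀ from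
    (this Finset.univ x (by simp)).resolve_left hx
  intro s
  induction s using Finset.induction_on with
  | empty => exact fun x hx => .inl (InnerProductSpace.ext_inner_right_basis b.toBasis fun j => by simpa using hx j)
  | insert i s _ ih =>
    intro x hx
    by_cases hxi : ⟪x, b i⟫ = ⟪x₀, b i⟫
    · refine ih x fun j hj => ?_
      by_cases hji : j = i
      · rwa [hji]
      · exact hx j (by simp [hji, hj])
    · set y := x + (⟪x₀, b i⟫ - ⟪x, b i⟫) • b i
      have hy : ∀ j ∉ s, ⟪y, b j⟫ = ⟪x₀, b j⟫ := by
        intro j hj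
        simp only [y, inner_add_left, real_inner_smul_left, b.inner_eq_ite]
        by_cases hji : i = j
        · subst hji; simp
        · simpa [hji] using hx j (by simp [Ne.symm hji, hj])
      exact .inr <| (ih y hy).elim (fun h => h ▸ hstep i x hxi)
        fun h => (hstep i x hxi).trans h

lemma exists_forall_ne_lt_of_moving_plane [FiniteDimensional ℝ E] {u : E → ℝ}
    (hu : Differentiable ℝ u)
    (H : ∀ ν : E, ‖ν‖ = 1 → ∃ c : ℝ, (∀ x, ⟪x, ν⟫ < c → 0 < fderiv ℝ u x ν) ∧
      ∀ x, ⟪x, ν⟫ < c → u (hyperplaneReflection ν c x) = u x) :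
    ∃ x₀ : E, ∀ x ≠ x₀, u x < u x₀ := by
  let b := stdOrthonormalBasis ℝ E
  choose c hpos hsymm using fun i => H (b i) (b.norm_eq_one i)
  set x₀ := b.repr.symm (WithLp.toLp 2 c)
  have hx₀ : ∀ i, ⟪x₀, b i⟫ = c i := fun i => by
    rw [real_inner_comm, ← b.repr_apply_apply]
    simp [x₀]
  refine ⟨x₀, fun x hx => b.apply_lt_of_coordinate_ascent (fun i y hy => ?_) hx⟩
  rw [hx₀] at hy ⊢
  exact lt_apply_add_smul_of_inner_ne hu (b.norm_eq_one i) (hpos i) (hsymm i) hy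

lemma inner_eq_of_apply_hyperplaneReflection_eq {β : Type*} [Preorder β] {f : E → β} {x₀ ν : E}
    {c : ℝ} (hmax : ∀ x ≠ x₀, f x < f x₀) (hν : ‖ν‖ = 1)
    (hsymm : ∀ x, ⟪x, ν⟫ < c → f (hyperplaneReflection ν c x) = f x) : ⟪x₀, ν⟫ = c := by
  refine (hyperplaneReflection_eq_self_iff hν).mp (by_contra fun hne => ?_)
  exact (hmax _ hne).ne (apply_hyperplaneReflection_of_forall_inner_lt hν hsymm x₀)

theorem stmt_8_general {n : ℕ} (u : EuclideanSpace ℝ (Fin n) → ℝ)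
    (hu : ContDiff ℝ 2 u)
    (H : ∀ ν : EuclideanSpace ℝ (Fin n), ‖ν‖ = 1 → ∃ lam : ℝ,
      (∀ x : EuclideanSpace ℝ (Fin n), (inner ℝ x ν : ℝ) < lam → 0 < fderiv ℝ u x ν) ∧
      (∀ x : EuclideanSpace ℝ (Fin n), lam < (inner ℝ x ν : ℝ) → fderiv ℝ u x ν < 0) ∧
      (∀ x : EuclideanSpace ℝ (Fin n), (inner ℝ x ν : ℝ) < lam →
        u (x - (2 * ((inner ℝ x ν : ℝ) - lam)) • ν) = u x)) :
    ∃ x₀ : EuclideanSpace ℝ (Fin n),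
      ∀ x y : EuclideanSpace ℝ (Fin n), ‖x - x₀‖ = ‖y - x₀‖ → u x = u y := by
  obtain ⟨x₀, hmax⟩ := exists_forall_ne_lt_of_moving_plane (hu.differentiable two_ne_zero)
    fun ν hν => (H ν hν).imp fun _ h => ⟨h.1, h.2.2⟩
  refine ⟨x₀, fun x y hxy => ?_⟩
  rcases eq_or_ne x y with rfl | hne
  · rfl
  have hν : ‖‖x - y‖⁻¹ • (x - y)‖ = 1 := by
    rw [norm_smul, norm_inv, norm_norm, inv_mul_cancel₀ (norm_ne_zero_iff.mpr (sub_ne_zero.mpr hne))]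
  obtain ⟨c, -, -, hsymm⟩ := H _ hν
  obtain rfl := inner_eq_of_apply_hyperplaneReflection_eq hmax hν hsymm
  rw [← apply_hyperplaneReflection_of_forall_inner_lt hν hsymm x,
    hyperplaneReflection_of_norm_sub_eq_norm_sub hne hxy]

theorem stmt_8 {n : ℕ} (hn : 2 ≤ n) (u : EuclideanSpace ℝ (Fin n) → ℝ)
    (hu : ContDiff ℝ 2 u)
    (H : ∀ ν : EuclideanSpace ℝ (Fin n), ‖ν‖ = 1 → ∃ lam : ℝ,
      (∀ x : EuclideanSpace ℝ (Fin n), (inner ℝ x ν : ℝ) < lam → 0 < fderiv ℝ u x ν) ∧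
      (∀ x : EuclideanSpace ℝ (Fin n), lam < (inner ℝ x ν : ℝ) → fderiv ℝ u x ν < 0) ∧
      (∀ x : EuclideanSpace ℝ (Fin n), (inner ℝ x ν : ℝ) < lam →
        u (x - (2 * ((inner ℝ x ν : ℝ) - lam)) • ν) = u x)) :
    ∃ x₀ : EuclideanSpace ℝ (Fin n),
      ∀ x y : EuclideanSpace ℝ (Fin n), ‖x - x₀‖ = ‖y - x₀‖ → u x = u y :=
  stmt_8_general u hu H
end

section
/- Let n ≥ 2, let f : [0,∞) → ℝ be C¹ with f ≥ 0 and f(s) > 0 for s > 0, and let u ∈ C²(ℝⁿ) be a positive solution of Δu + f(u) = 0 on ℝⁿ. Suppose for every unit vector ν ∈ ℝⁿ there exists λ_ν ∈ ℝ such that: (i) ∂u/∂ν(x) ≥ 0 for x·ν < λ_ν; (ii) ∂u/∂ν(x) ≤ 0 for x·ν > λ_ν; (iii) u(x − 2(x·ν − λ_ν)ν) = u(x) for all x with x·ν < λ_ν; and (iv) the map ν ↦ λ_ν is continuous on the unit sphere S^{n−1}. Then u is radially symmetric about some point x₀ ∈ ℝⁿ. -/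
/-- Second directional derivative in coordinate direction `i`. -/
noncomputable def secondDeriv {n : ℕ} (u : EuclideanSpace ℝ (Fin n) → ℝ)
    (x : EuclideanSpace ℝ (Fin n)) (i : Fin n) : ℝ :=
  fderiv ℝ (fun y => fderiv ℝ u y (EuclideanSpace.single i 1)) x (EuclideanSpace.single i 1)

/-- The Laplacian as the sum of second coordinate derivatives. -/
noncomputable def laplacian {n : ℕ} (u : EuclideanSpace ℝ (Fin n) → ℝ)
    (x : EuclideanSpace ℝ (Fin n)) : ℝ :=
  ∑ i : Fin n, secondDeriv u x i

/-!
Moving along `ν` towards the hyperplane `⟪x, ν⟫ = λ_ν` never decreases `u`; doing this for the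
coordinate directions one at a time shows that the point `x₀` with coordinates `λ_{eᵢ}` is a
global maximum. Then `u` is maximal on each segment from `x₀` to `x₀ + (λ_ν - ⟪x₀, ν⟫) ν`. If
`λ_ν ≠ ⟪x₀, ν⟫` for one `ν`, continuity of `λ` fans these segments out into a cone with nonempty
interior on which `u` is constant, so `f(u) = -Δu = 0` there, contradicting `u > 0`. Hence every
hyperplane of symmetry passes through `x₀`, and reflecting in the perpendicular bisector of `x`
and `y` gives `u x = u y` whenever `‖x - x₀‖ = ‖y - x₀‖`.
-/

open Filter Metric Set Topology
open scoped RealInnerProductSpace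

section InnerProductSpace

variable {E : Type*} [NormedAddCommGroup E] [InnerProductSpace ℝ E]

lemma le_apply_add_smul_of_fderiv_sign {u : E → ℝ} (hu : Differentiable ℝ u) {ν : E}
    (hν : ‖ν‖ = 1) {L : ℝ} (hup : ∀ x, ⟪x, ν⟫ < L → 0 ≤ fderiv ℝ u x ν)
    (hdown : ∀ x, L < ⟪x, ν⟫ → fderiv ℝ u x ν ≤ 0) (x : E) {t : ℝ}
    (ht : t ∈ uIcc 0 (L - ⟪x, ν⟫)) : u x ≤ u (x + t • ν) := by
  set g : ℝ → ℝ := fun s => u (x + s • ν)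
  have hg : ∀ s, HasDerivAt g (fderiv ℝ u (x + s • ν) ν) s := fun s =>
    (hu _).hasFDerivAt.comp_hasDerivAt s
      ((((hasDerivAt_id s).smul_const ν).const_add x).congr_deriv (one_smul ℝ ν))
  have hinner : ∀ s, ⟪x + s • ν, ν⟫ = ⟪x, ν⟫ + s := fun s => by
    rw [inner_add_left, real_inner_smul_left, real_inner_self_eq_norm_sq, hν]; ring
  have hgc : Continuous g := continuous_iff_continuousAt.2 fun s => (hg s).continuousAt
  have hgd : Differentiable ℝ g := fun s => (hg s).differentiableAt
  suffices g 0 ≤ g t by simpa [g] using this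
  rcases le_total 0 (L - ⟪x, ν⟫) with h | h
  · rw [uIcc_of_le h] at ht
    refine monotoneOn_of_deriv_nonneg (convex_Icc _ _) hgc.continuousOn hgd.differentiableOn
      (fun s hs => ?_) (left_mem_Icc.2 h) ht ht.1
    rw [interior_Icc] at hs
    rw [(hg s).deriv]
    exact hup _ (by rw [hinner]; linarith [hs.2])
  · rw [uIcc_of_ge h] at ht
    refine antitoneOn_of_deriv_nonpos (convex_Icc _ _) hgc.continuousOn hgd.differentiableOn
      (fun s hs => ?_) ht (right_mem_Icc.2 h) ht.2
    rw [interior_Icc] at hs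
    rw [(hg s).deriv]
    exact hdown _ (by rw [hinner]; linarith [hs.1])

lemma le_apply_sum_smul {ι : Type*} [Fintype ι] (b : OrthonormalBasis ι ℝ E) (c : ι → ℝ)
    {u : E → ℝ} (h : ∀ x i, u x ≤ u (x + (c i - ⟪x, b i⟫) • b i)) (x : E) :
    u x ≤ u (∑ i, c i • b i) := by
  classical
  suffices hs : ∀ s : Finset ι, ∀ x, (∀ i ∉ s, ⟪x, b i⟫ = c i) → u x ≤ u (∑ i, c i • b i) from
    hs Finset.univ x (by simp)
  intro s
  induction s using Finset.induction_on with
  | empty =>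
    intro x hx
    have hx₀ : ∑ i, c i • b i = x := by
      conv_rhs => rw [← b.sum_repr' x]
      exact Finset.sum_congr rfl fun i _ => by rw [real_inner_comm, hx i (Finset.notMem_empty i)]
    rw [hx₀]
  | insert i s hi ih =>
    intro x hx
    refine (h x i).trans (ih _ fun j hj => ?_)
    rw [inner_add_left, real_inner_smul_left, b.inner_eq_ite]
    by_cases hji : j = i
    · subst hji; simp
    · simpa [Ne.symm hji] using hx j (by simp [hji, hj])

lemma eq_of_norm_sub_eq_of_reflect {u : E → ℝ} {x₀ : E}
    (h : ∀ ν, ‖ν‖ = 1 → ∀ x, ⟪x, ν⟫ < ⟪x₀, ν⟫ → u (x - (2 * (⟪x, ν⟫ - ⟪x₀, ν⟫)) • ν) = u x)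
    {x y : E} (hxy : ‖x - x₀‖ = ‖y - x₀‖) : u x = u y := by
  rcases eq_or_ne x y with rfl | hne
  · rfl
  have hd : 0 < ‖x - y‖ := norm_pos_iff.2 (sub_ne_zero.2 hne)
  set ν := ‖x - y‖⁻¹ • (x - y)
  have hν : ‖ν‖ = 1 := by simp [ν, norm_smul, hd.ne']
  have hobtuse : ⟪y - x₀, x - y⟫ = -‖x - y‖ ^ 2 / 2 := by
    rw [← sub_sub_sub_cancel_right x y x₀, inner_sub_right, real_inner_self_eq_norm_sq,
      norm_sub_sq_real (x - x₀), hxy, real_inner_comm]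
    ring
  have hinner : ⟪y, ν⟫ - ⟪x₀, ν⟫ = -‖x - y‖ / 2 := by
    rw [← inner_sub_left, real_inner_smul_right, hobtuse]
    field_simp
  have hrefl : y - (2 * (⟪y, ν⟫ - ⟪x₀, ν⟫)) • ν = x := by
    rw [hinner, smul_smul, show 2 * (-‖x - y‖ / 2) * ‖x - y‖⁻¹ = -1 by field_simp]
    abel_nf
    simp
  rw [← h ν hν y (by linarith), hrefl]

end InnerProductSpace

section NormedSpace

variable {E : Type*} [NormedAddCommGroup E] [NormedSpace ℝ E]

lemma exists_eventually_eq_add_smul_of_pos {m : E → ℝ} (hm : ContinuousOn m (sphere 0 1))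
    {ν₀ : E} (hν₀ : ‖ν₀‖ = 1) (h : 0 < m ν₀) (x₀ : E) :
    ∃ p, ∀ᶠ x in 𝓝 p, ∃ ν, ‖ν‖ = 1 ∧ ∃ t ∈ Icc 0 (m ν), x = x₀ + t • ν := by
  set p := x₀ + (m ν₀ / 2) • ν₀
  set φ : E → E := fun x => ‖x - x₀‖⁻¹ • (x - x₀)
  have hpsub : p - x₀ = (m ν₀ / 2) • ν₀ := add_sub_cancel_left _ _
  have hpx₀ : ‖p - x₀‖ = m ν₀ / 2 := by
    rw [hpsub, norm_smul, hν₀, Real.norm_of_nonneg (by positivity), mul_one]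
  have hp : ∀ᶠ x in 𝓝 p, x ≠ x₀ := eventually_ne_nhds fun hp => by simp [hp] at hpx₀; linarith
  have hφ : Tendsto φ (𝓝 p) (𝓝[sphere 0 1] ν₀) := by
    refine tendsto_nhdsWithin_iff.2 ⟨?_, hp.mono fun x hx => ?_⟩
    · have hφp : φ p = ν₀ := by
        change ‖p - x₀‖⁻¹ • (p - x₀) = ν₀
        rw [hpx₀, hpsub, smul_smul, inv_mul_cancel₀ (by positivity), one_smul]
      rw [← hφp]
      exact ((continuous_norm.comp (continuous_sub_right x₀)).continuousAt.inv₀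
        (by rw [Function.comp_apply, hpx₀]; positivity)).smul (continuous_sub_right x₀).continuousAt
    · simp [φ, norm_smul, sub_ne_zero.2 hx]
  have hlim : Tendsto (fun x => m (φ x) - ‖x - x₀‖) (𝓝 p) (𝓝 (m ν₀ - ‖p - x₀‖)) :=
    ((hm ν₀ (by simpa using hν₀)).tendsto.comp hφ).sub (continuous_norm.comp
      (continuous_sub_right x₀)).continuousAt.tendsto
  refine ⟨p, (hp.and (hlim.eventually (lt_mem_nhds (a := 0) (by rw [hpx₀]; linarith)))).mono ?_⟩
  rintro x ⟨hx, hxm⟩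
  have hxn : ‖x - x₀‖ ≠ 0 := norm_ne_zero_iff.2 (sub_ne_zero.2 hx)
  refine ⟨φ x, by simp [φ, norm_smul, hxn], ‖x - x₀‖, ⟨norm_nonneg _, by linarith⟩, ?_⟩
  rw [smul_smul, mul_inv_cancel₀ hxn, one_smul, add_sub_cancel]

lemma exists_eventually_eq_add_smul_of_ne_zero {m : E → ℝ} (hm : ContinuousOn m (sphere 0 1))
    {ν₀ : E} (hν₀ : ‖ν₀‖ = 1) (h : m ν₀ ≠ 0) (x₀ : E) :
    ∃ p, ∀ᶠ x in 𝓝 p, ∃ ν, ‖ν‖ = 1 ∧ ∃ t ∈ uIcc 0 (m ν), x = x₀ + t • ν := by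
  rcases h.lt_or_gt with hneg | hpos
  · have hm' : ContinuousOn (fun ν => -m (-ν)) (sphere 0 1) :=
      (hm.comp continuous_neg.continuousOn fun ν hν => by simpa using hν).neg
    obtain ⟨p, hp⟩ := exists_eventually_eq_add_smul_of_pos hm' (ν₀ := -ν₀) (by simpa using hν₀)
      (by simpa using hneg) x₀
    refine ⟨p, hp.mono ?_⟩
    rintro x ⟨ν, hν, t, ht, rfl⟩
    refine ⟨-ν, by simpa using hν, -t, ?_, by simp⟩
    rw [uIcc_of_ge (by linarith [ht.1, ht.2])]
    exact ⟨by linarith [ht.2], by linarith [ht.1]⟩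
  · obtain ⟨p, hp⟩ := exists_eventually_eq_add_smul_of_pos hm hν₀ hpos x₀
    exact ⟨p, hp.mono fun x ⟨ν, hν, t, ht, hx⟩ => ⟨ν, hν, t, Icc_subset_uIcc ht, hx⟩⟩

lemma eq_zero_of_forall_le_apply_add_smul {u m : E → ℝ} {x₀ : E}
    (hm : ContinuousOn m (sphere 0 1)) (hmax : ∀ x, u x ≤ u x₀)
    (hseg : ∀ ν, ‖ν‖ = 1 → ∀ t ∈ uIcc 0 (m ν), u x₀ ≤ u (x₀ + t • ν))
    (hloc : ∀ p, ¬ ∀ᶠ x in 𝓝 p, u x = u x₀) {ν : E} (hν : ‖ν‖ = 1) : m ν = 0 := by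
  by_contra h
  obtain ⟨p, hp⟩ := exists_eventually_eq_add_smul_of_ne_zero hm hν h x₀
  exact hloc p (hp.mono fun x ⟨ν, hν, t, ht, hx⟩ => hx ▸ (hmax _).antisymm (hseg ν hν t ht))

end NormedSpace

lemma laplacian_eq_zero_of_eventually_eq {n : ℕ} {u : EuclideanSpace ℝ (Fin n) → ℝ}
    {p : EuclideanSpace ℝ (Fin n)} {c : ℝ} (h : ∀ᶠ x in 𝓝 p, u x = c) : laplacian u p = 0 := by
  have hDu : ∀ᶠ y in 𝓝 p, fderiv ℝ u y = 0 := h.eventually_nhds.mono fun y hy => by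
    rw [Filter.EventuallyEq.fderiv_eq (f := fun _ => c) hy, fderiv_const_apply]
  refine Finset.sum_eq_zero fun i _ => ?_
  rw [secondDeriv, Filter.EventuallyEq.fderiv_eq (f := fun _ => (0 : ℝ))
    (hDu.mono fun y hy => by simp [hy]), fderiv_const_apply]; rfl

theorem stmt_9_general {n : ℕ} (f : ℝ → ℝ)
    (hfpos : ∀ s > (0:ℝ), 0 < f s)
    (u : EuclideanSpace ℝ (Fin n) → ℝ) (hu : ContDiff ℝ 2 u)
    (hupos : ∀ x, 0 < u x)
    (hpde : ∀ x, laplacian u x + f (u x) = 0)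
    (lam : EuclideanSpace ℝ (Fin n) → ℝ)
    (hlamcont : ContinuousOn lam (Metric.sphere (0 : EuclideanSpace ℝ (Fin n)) 1))
    (H : ∀ ν : EuclideanSpace ℝ (Fin n), ‖ν‖ = 1 →
      (∀ x : EuclideanSpace ℝ (Fin n), (inner ℝ x ν : ℝ) < lam ν → 0 ≤ fderiv ℝ u x ν) ∧
      (∀ x : EuclideanSpace ℝ (Fin n), lam ν < (inner ℝ x ν : ℝ) → fderiv ℝ u x ν ≤ 0) ∧
      (∀ x : EuclideanSpace ℝ (Fin n), (inner ℝ x ν : ℝ) < lam ν →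
        u (x - (2 * ((inner ℝ x ν : ℝ) - lam ν)) • ν) = u x)) :
    ∃ x₀ : EuclideanSpace ℝ (Fin n),
      ∀ x y : EuclideanSpace ℝ (Fin n), ‖x - x₀‖ = ‖y - x₀‖ → u x = u y := by
  have hmono : ∀ ν, ‖ν‖ = 1 → ∀ x, ∀ t ∈ uIcc 0 (lam ν - ⟪x, ν⟫), u x ≤ u (x + t • ν) :=
    fun ν hν x _ ht => le_apply_add_smul_of_fderiv_sign (hu.differentiable two_ne_zero) hν
      (H ν hν).1 (H ν hν).2.1 x ht
  set b := EuclideanSpace.basisFun (Fin n) ℝ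
  set x₀ := ∑ i, lam (b i) • b i
  have hmax : ∀ x, u x ≤ u x₀ :=
    le_apply_sum_smul b _ fun x i => hmono (b i) (b.norm_eq_one i) x _ right_mem_uIcc
  have hnowhere_const : ∀ p, ¬ ∀ᶠ x in 𝓝 p, u x = u x₀ := fun p hp => by
    have := hpde p
    rw [laplacian_eq_zero_of_eventually_eq hp, zero_add] at this
    exact (hfpos _ (hupos p)).ne' this
  have hlam : ∀ ν, ‖ν‖ = 1 → lam ν - ⟪x₀, ν⟫ = 0 := fun ν hν =>
    eq_zero_of_forall_le_apply_add_smul (hlamcont.sub (by fun_prop)) hmax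
      (fun ν hν => hmono ν hν x₀) hnowhere_const hν
  refine ⟨x₀, fun x y hxy => eq_of_norm_sub_eq_of_reflect (fun ν hν z hz => ?_) hxy⟩
  rw [← sub_eq_zero.1 (hlam ν hν)] at hz ⊢
  exact (H ν hν).2.2 z hz

theorem stmt_9 {n : ℕ} (hn : 2 ≤ n) (f : ℝ → ℝ)
    (hf : ContDiffOn ℝ 1 f (Set.Ici 0)) (hf0 : ∀ s ∈ Set.Ici (0:ℝ), 0 ≤ f s)
    (hfpos : ∀ s > (0:ℝ), 0 < f s)
    (u : EuclideanSpace ℝ (Fin n) → ℝ) (hu : ContDiff ℝ 2 u)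
    (hupos : ∀ x, 0 < u x)
    (hpde : ∀ x, laplacian u x + f (u x) = 0)
    (lam : EuclideanSpace ℝ (Fin n) → ℝ)
    (hlamcont : ContinuousOn lam (Metric.sphere (0 : EuclideanSpace ℝ (Fin n)) 1))
    (H : ∀ ν : EuclideanSpace ℝ (Fin n), ‖ν‖ = 1 →
      (∀ x : EuclideanSpace ℝ (Fin n), (inner ℝ x ν : ℝ) < lam ν → 0 ≤ fderiv ℝ u x ν) ∧
      (∀ x : EuclideanSpace ℝ (Fin n), lam ν < (inner ℝ x ν : ℝ) → fderiv ℝ u x ν ≤ 0) ∧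
      (∀ x : EuclideanSpace ℝ (Fin n), (inner ℝ x ν : ℝ) < lam ν →
        u (x - (2 * ((inner ℝ x ν : ℝ) - lam ν)) • ν) = u x)) :
    ∃ x₀ : EuclideanSpace ℝ (Fin n),
      ∀ x y : EuclideanSpace ℝ (Fin n), ‖x - x₀‖ = ‖y - x₀‖ → u x = u y :=
  stmt_9_general f hfpos u hu hupos hpde lam hlamcont H
end
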